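/- Let n ≥ 4. In the singular Hecke algebra H(SB_n), set ω_0 = σ_1σ_2 + σ_3σ_2 + σ_1σ_3 − (q−1)σ_1 − (q−1)σ_2 − (q−1)σ_3 + (q²−q+1) and C_{13} = 2σ_1σ_3 − (q−1)σ_1 − (q−1)σ_3 + q² + 1. Then C_{13} = q^{−2} (qσ_1ω_0 + qω_0σ_3 + (q−1)σ_1ω_0σ_3 − σ_1ω_0σ_3σ_2)(σ_1 − (q−1)). -/

import Mathlib

noncomputable section
open scoped Classical

/-- `𝕂 = ℂ(q)`. -/
abbrev K : Type := RatFunc ℂ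
/-- `𝕂(z)`. -/
abbrev Kz : Type := RatFunc K
/-- the variable `q`. -/
def q : K := RatFunc.X
/-- the variable `z`. -/
def z : Kz := RatFunc.X

/-- Generators of the singular braid monoid on `n` strands:
`s i` is `σ_{i+1}`, `si i` is `σ_{i+1}⁻¹`, `t i` is `τ_{i+1}` (0-indexed `i`). -/
inductive SBGen (n : ℕ) : Type
  | s (i : Fin (n - 1))
  | si (i : Fin (n - 1))
  | t (i : Fin (n - 1))

/-- `|i - j| = 1`. -/
def adj {n : ℕ} (i j : Fin (n - 1)) : Prop := (i : ℕ) + 1 = (j : ℕ) ∨ (j : ℕ) + 1 = (i : ℕ)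
/-- `|i - j| ≥ 2`. -/
def far {n : ℕ} (i j : Fin (n - 1)) : Prop := (i : ℕ) + 2 ≤ (j : ℕ) ∨ (j : ℕ) + 2 ≤ (i : ℕ)

open FreeMonoid in
/-- The defining relations of the singular braid monoid. -/
inductive SBRel (n : ℕ) : FreeMonoid (SBGen n) → FreeMonoid (SBGen n) → Prop
  | inv_right (i) : SBRel n (of (.s i) * of (.si i)) 1
  | inv_left (i) : SBRel n (of (.si i) * of (.s i)) 1
  | sigma_tau (i) : SBRel n (of (.s i) * of (.t i)) (of (.t i) * of (.s i))
  | braid (i j) : adj i j →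
      SBRel n (of (.s i) * of (.s j) * of (.s i)) (of (.s j) * of (.s i) * of (.s j))
  | braid_tau (i j) : adj i j →
      SBRel n (of (.s i) * of (.s j) * of (.t i)) (of (.t j) * of (.s i) * of (.s j))
  | ss_comm (i j) : far i j → SBRel n (of (.s i) * of (.s j)) (of (.s j) * of (.s i))
  | st_comm (i j) : far i j → SBRel n (of (.s i) * of (.t j)) (of (.t j) * of (.s i))
  | tt_comm (i j) : far i j → SBRel n (of (.t i) * of (.t j)) (of (.t j) * of (.t i))

/-- The congruence generated by the singular braid relations. -/
def SBcon (n : ℕ) : Con (FreeMonoid (SBGen n)) := conGen (SBRel n)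

/-- The singular braid monoid `SB_n`. -/
def SB (n : ℕ) : Type := (SBcon n).Quotient

instance (n : ℕ) : Monoid (SB n) := Con.monoid _

/-- The generator `σ_{i+1}` of `SB_n`. -/
def sσ {n : ℕ} (i : Fin (n - 1)) : SB n := (SBcon n).mk' (FreeMonoid.of (.s i))
/-- The generator `σ_{i+1}⁻¹` of `SB_n`. -/
def sσi {n : ℕ} (i : Fin (n - 1)) : SB n := (SBcon n).mk' (FreeMonoid.of (.si i))
/-- The generator `τ_{i+1}` of `SB_n`. -/
def sτ {n : ℕ} (i : Fin (n - 1)) : SB n := (SBcon n).mk' (FreeMonoid.of (.t i))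

/-- Number of singular points of a generator. -/
def genDeg {n : ℕ} : SBGen n → Multiplicative ℕ
  | .t _ => Multiplicative.ofAdd 1
  | _ => 1

/-- Number of singular points of a word. -/
def degF (n : ℕ) : FreeMonoid (SBGen n) →* Multiplicative ℕ := FreeMonoid.lift genDeg

lemma degF_rel {n : ℕ} : SBcon n ≤ Con.ker (degF n) := by
  refine Con.conGen_le.mpr ?_
  rintro x y h
  rw [Con.ker_rel]
  cases h <;>
    simp [degF, genDeg, mul_comm]

/-- The number of singular points, as a monoid homomorphism. -/
def deg {n : ℕ} : SB n →* Multiplicative ℕ := Con.lift _ (degF n) degF_rel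

/-- The number of singular points of a singular braid. -/
def ndeg {n : ℕ} (β : SB n) : ℕ := Multiplicative.toAdd (deg β)

/-- `S_d B_n` : the set of singular braids on `n` strands with `d` singular points. -/
def SdB (d n : ℕ) : Set (SB n) := {β | ndeg β = d}

lemma ndeg_mul {n : ℕ} (α β : SB n) : ndeg (α * β) = ndeg α + ndeg β := by
  simp [ndeg, map_mul]

lemma ndeg_one {n : ℕ} : ndeg (1 : SB n) = 0 := by simp [ndeg]

lemma ndeg_pow {n : ℕ} (β : SB n) (m : ℕ) : ndeg (β ^ m) = m * ndeg β := by
  induction m with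
  | zero => simp [ndeg_one]
  | succ m ih => rw [pow_succ, ndeg_mul, ih]; ring

lemma ndeg_sσ {n : ℕ} (i : Fin (n - 1)) : ndeg (sσ i) = 0 := rfl

lemma ndeg_sσi {n : ℕ} (i : Fin (n - 1)) : ndeg (sσi i) = 0 := by
  rfl

lemma ndeg_sτ {n : ℕ} (i : Fin (n - 1)) : ndeg (sτ i) = 1 := by
  rfl

lemma mem_SdB {n d : ℕ} {β : SB n} (h : ndeg β = d) : β ∈ SdB d n := h
/-- The monoid algebra `𝕂[SB_n]`. -/
abbrev MA (n : ℕ) : Type := MonoidAlgebra K (SB n)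

/-- The Hecke relations `σ_k² = (q-1)σ_k + q`. -/
def hrel (n : ℕ) : MA n → MA n → Prop := fun x y =>
  ∃ i : Fin (n - 1), x = (MonoidAlgebra.of K (SB n) (sσ i)) ^ 2 ∧
    y = (q - 1) • MonoidAlgebra.of K (SB n) (sσ i) + q • 1

/-- The singular Hecke algebra `H(SB_n)`. -/
def H (n : ℕ) : Type := RingQuot (hrel n)

instance (n : ℕ) : Ring (H n) := inferInstanceAs (Ring (RingQuot (hrel n)))
instance (n : ℕ) : Algebra K (H n) := inferInstanceAs (Algebra K (RingQuot (hrel n)))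

/-- The natural map `SB_n → H(SB_n)`. -/
def ιH {n : ℕ} (β : SB n) : H n := RingQuot.mkAlgHom K (hrel n) (MonoidAlgebra.of K (SB n) β)

/-- The image of `σ_{i+1}` in the singular Hecke algebra. -/
def σH {n : ℕ} (i : Fin (n - 1)) : H n := ιH (sσ i)
/-- The image of `τ_{i+1}` in the singular Hecke algebra. -/
def τH {n : ℕ} (i : Fin (n - 1)) : H n := ιH (sτ i)

/-- Scalars inside the singular Hecke algebra. -/
def cK {n : ℕ} (c : K) : H n := algebraMap K (H n) c

/-- `H(S_d B_n)` : the 𝕂-subspace of `H(SB_n)` spanned by the braids with `d` singular points. -/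
def HSd (d n : ℕ) : Submodule K (H n) := Submodule.span K (ιH '' SdB d n)

lemma ιH_mem {n d : ℕ} {β : SB n} (h : β ∈ SdB d n) : ιH β ∈ HSd d n :=
  Submodule.subset_span ⟨β, h, rfl⟩

/-- Map on generators realizing the inclusion `SB_n ↪ SB_{n+1}`. -/
def genMap {n : ℕ} : SBGen n → SBGen (n + 1)
  | .s i => .s (Fin.castLE (by omega) i)
  | .si i => .si (Fin.castLE (by omega) i)
  | .t i => .t (Fin.castLE (by omega) i)

lemma incl_wd {n : ℕ} :
    SBcon n ≤ Con.ker ((SBcon (n + 1)).mk'.comp (FreeMonoid.map genMap)) := by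
  refine Con.conGen_le.mpr ?_
  rintro x y h
  rw [Con.ker_rel]
  cases h with
  | inv_right i => exact (Con.eq _).mpr (ConGen.Rel.of _ _ (SBRel.inv_right _))
  | inv_left i => exact (Con.eq _).mpr (ConGen.Rel.of _ _ (SBRel.inv_left _))
  | sigma_tau i => exact (Con.eq _).mpr (ConGen.Rel.of _ _ (SBRel.sigma_tau _))
  | braid i j hij =>
      refine (Con.eq _).mpr (ConGen.Rel.of _ _ (SBRel.braid _ _ ?_))
      simpa [adj] using hij
  | braid_tau i j hij =>
      refine (Con.eq _).mpr (ConGen.Rel.of _ _ (SBRel.braid_tau _ _ ?_))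
      simpa [adj] using hij
  | ss_comm i j hij =>
      refine (Con.eq _).mpr (ConGen.Rel.of _ _ (SBRel.ss_comm _ _ ?_))
      simpa [far] using hij
  | st_comm i j hij =>
      refine (Con.eq _).mpr (ConGen.Rel.of _ _ (SBRel.st_comm _ _ ?_))
      simpa [far] using hij
  | tt_comm i j hij =>
      refine (Con.eq _).mpr (ConGen.Rel.of _ _ (SBRel.tt_comm _ _ ?_))
      simpa [far] using hij

/-- The natural monoid homomorphism `SB_n → SB_{n+1}`. -/
def incl {n : ℕ} : SB n →* SB (n + 1) :=
  Con.lift _ ((SBcon (n + 1)).mk'.comp (FreeMonoid.map genMap)) incl_wd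

lemma degF_genMap {n : ℕ} (w : FreeMonoid (SBGen n)) :
    degF (n + 1) (FreeMonoid.map genMap w) = degF n w := by
  change ((degF (n+1)).comp (FreeMonoid.map genMap)) w = degF n w
  refine DFunLike.congr_fun (FreeMonoid.hom_eq fun a => ?_) w
  cases a <;> rfl

lemma ndeg_incl {n : ℕ} (β : SB n) : ndeg (incl β) = ndeg β := by
  induction β using Con.induction_on with
  | H w =>
    show Multiplicative.toAdd (degF (n + 1) (FreeMonoid.map genMap w)) =
      Multiplicative.toAdd (degF n w)
    rw [degF_genMap]

/-- The generator `σ_n` of `SB_{n+2}` (0-indexed `n`), used in the Markov condition. -/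
def lastGen (n : ℕ) : Fin ((n + 2) - 1) := ⟨n, by omega⟩

/-- A collection of 𝕂-linear maps `H(S_d B_n) → 𝕂(z)`, `n ≥ 1`
(index `n` in the collection corresponds to `n+1` strands). -/
abbrev TRc (d : ℕ) : Type := ∀ n : ℕ, HSd d (n + 1) →ₗ[K] Kz

/-- The Markov trace conditions. -/
def IsMarkov (d : ℕ) (T : TRc d) : Prop :=
  (∀ (n k l : ℕ) (α β : SB (n + 1)), α ∈ SdB k (n + 1) → β ∈ SdB l (n + 1) → k + l = d →
    ∀ (h₁ : ιH (α * β) ∈ HSd d (n + 1)) (h₂ : ιH (β * α) ∈ HSd d (n + 1)),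
      T n ⟨ιH (α * β), h₁⟩ = T n ⟨ιH (β * α), h₂⟩) ∧
  (∀ (n : ℕ) (β : SB (n + 1)), β ∈ SdB d (n + 1) →
    ∀ (h₁ : ιH (incl β) ∈ HSd d (n + 2)) (h₂ : ιH β ∈ HSd d (n + 1)),
      T (n + 1) ⟨ιH (incl β), h₁⟩ = T n ⟨ιH β, h₂⟩) ∧
  (∀ (n : ℕ) (β : SB (n + 1)), β ∈ SdB d (n + 1) →
    ∀ (h₁ : ιH (incl β * sσ (lastGen n)) ∈ HSd d (n + 2)) (h₂ : ιH β ∈ HSd d (n + 1)),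
      T (n + 1) ⟨ιH (incl β * sσ (lastGen n)), h₁⟩ = z * T n ⟨ιH β, h₂⟩)

/-- `TR_d` : the 𝕂(z)-vector space of Markov traces on `{H(S_d B_n)}ₙ`. -/
def TR (d : ℕ) : Submodule Kz (TRc d) where
  carrier := {T | IsMarkov d T}
  add_mem' := by
    rintro a b ⟨ha1, ha2, ha3⟩ ⟨hb1, hb2, hb3⟩
    refine ⟨?_, ?_, ?_⟩
    · intro n k l α β hα hβ hkl h₁ h₂
      simp only [Pi.add_apply, LinearMap.add_apply,
        ha1 n k l α β hα hβ hkl h₁ h₂, hb1 n k l α β hα hβ hkl h₁ h₂]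
    · intro n β hβ h₁ h₂
      simp only [Pi.add_apply, LinearMap.add_apply, ha2 n β hβ h₁ h₂, hb2 n β hβ h₁ h₂]
    · intro n β hβ h₁ h₂
      simp only [Pi.add_apply, LinearMap.add_apply, ha3 n β hβ h₁ h₂, hb3 n β hβ h₁ h₂]
      ring
  zero_mem' := by
    refine ⟨?_, ?_, ?_⟩ <;> intros <;> simp
  smul_mem' := by
    rintro c a ⟨ha1, ha2, ha3⟩
    refine ⟨?_, ?_, ?_⟩
    · intro n k l α β hα hβ hkl h₁ h₂
      simp only [Pi.smul_apply, LinearMap.smul_apply, ha1 n k l α β hα hβ hkl h₁ h₂]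
    · intro n β hβ h₁ h₂
      simp only [Pi.smul_apply, LinearMap.smul_apply, ha2 n β hβ h₁ h₂]
    · intro n β hβ h₁ h₂
      simp only [Pi.smul_apply, LinearMap.smul_apply, ha3 n β hβ h₁ h₂, smul_eq_mul]
      ring

lemma ndeg_list_prod {n : ℕ} (l : List (SB n)) : ndeg l.prod = (l.map ndeg).sum := by
  induction l with
  | nil => simpa using ndeg_one
  | cons a l ih => simp [ndeg_mul, ih]

lemma mem_expr {m d : ℕ} (α : Fin (d + 1) → SB m) (hα : ∀ j, α j ∈ SdB 0 m)
    (idx : Fin d → Fin (m - 1)) :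
    (α 0 * (List.ofFn fun j : Fin d => sτ (idx j) * α j.succ).prod) ∈ SdB d m := by
  refine mem_SdB ?_
  rw [ndeg_mul, ndeg_list_prod, List.map_ofFn, hα 0]
  have h : (fun j : Fin d => ndeg (sτ (idx j) * α j.succ)) = fun _ => 1 := by
    funext j; rw [ndeg_mul, ndeg_sτ, hα j.succ]
  rw [show ndeg ∘ (fun j : Fin d => sτ (idx j) * α j.succ)
      = fun j : Fin d => ndeg (sτ (idx j) * α j.succ) from rfl, h]
  simp

lemma mem_exprS {m d : ℕ} (α : Fin (d + 1) → SB m) (hα : ∀ j, α j ∈ SdB 0 m)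
    (idx : Fin d → Fin (m - 1)) (S : Finset (Fin d)) :
    (α 0 * (List.ofFn fun j : Fin d =>
      (if j ∈ S then sσ (idx j) else 1) * α j.succ).prod) ∈ SdB 0 m := by
  refine mem_SdB ?_
  rw [ndeg_mul, ndeg_list_prod, List.map_ofFn, hα 0]
  have h : (fun j : Fin d => ndeg ((if j ∈ S then sσ (idx j) else 1) * α j.succ))
      = fun _ => 0 := by
    funext j
    rw [ndeg_mul, hα j.succ]
    split <;> simp [ndeg_sσ, ndeg_one]
  rw [show ndeg ∘ (fun j : Fin d => (if j ∈ S then sσ (idx j) else 1) * α j.succ)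
      = fun j : Fin d => ndeg ((if j ∈ S then sσ (idx j) else 1) * α j.succ) from rfl, h]
  simp

lemma mem_tau_pow {n : ℕ} (i : Fin (n - 1)) (d : ℕ) : (sτ i) ^ d ∈ SdB d n := by
  refine mem_SdB ?_; simp [ndeg_pow, ndeg_sτ]

lemma mem_tau_pow_sigma {n : ℕ} (i i' : Fin (n - 1)) (d : ℕ) :
    (sτ i) ^ d * sσ i' ∈ SdB d n := by
  refine mem_SdB ?_; simp [ndeg_mul, ndeg_pow, ndeg_sτ, ndeg_sσ]

lemma mem_tau_tau {n : ℕ} (i i' : Fin (n - 1)) (a b : ℕ) :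
    (sτ i) ^ a * (sτ i') ^ b ∈ SdB (a + b) n := by
  refine mem_SdB ?_; simp [ndeg_mul, ndeg_pow, ndeg_sτ]

lemma mem_tau_tau_sigma {n : ℕ} (i i' i'' : Fin (n - 1)) (a b : ℕ) :
    (sτ i) ^ a * (sτ i') ^ b * sσ i'' ∈ SdB (a + b) n := by
  refine mem_SdB ?_; simp [ndeg_mul, ndeg_pow, ndeg_sτ, ndeg_sσ]

/-- `σ_{i+1}` with out-of-range indices interpreted as `1`. -/
def sσ' (n : ℕ) (i : ℕ) : SB n := if h : i < n - 1 then sσ ⟨i, h⟩ else 1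

/-- `descChain n m = σ_{n-1} σ_{n-2} ⋯ σ_{n-m}` (1-indexed), `m` letters. -/
def descChain (n : ℕ) : ℕ → SB n
  | 0 => 1
  | m + 1 => descChain n m * sσ' n (n - 2 - m)

/-- The sets `ℬ_n` describing the standard basis of the Hecke algebra `H(B_n)`:
`ℬ_1 = {1}` and `ℬ_n = {β u : β ∈ ℬ_{n-1}, u ∈ U_n}` where
`U_n = {1, σ_{n-1}, σ_{n-1}σ_{n-2}, …, σ_{n-1}⋯σ_1}`. -/
def Bset : (n : ℕ) → Set (SB n)
  | 0 => {1}
  | n + 1 => {x | ∃ β ∈ Bset n, ∃ m ≤ n, x = incl β * descChain (n + 1) m}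

/-- The set `𝒞_{d,n}` of singular braids of the form `τ_{i_1} ⋯ τ_{i_d} β` with `β ∈ ℬ_n`. -/
def Cdn (d n : ℕ) : Set (SB n) :=
  {x | ∃ idx : Fin d → Fin (n - 1), ∃ β ∈ Bset n,
    x = (List.ofFn fun j : Fin d => sτ (idx j)).prod * β}

/-!
The identity follows from the quadratic relations of `σ₁, σ₃`, the commutation `σ₁σ₃ = σ₃σ₁`
and the braid relation `σ₂σ₃σ₂ = σ₃σ₂σ₃`. With `A = σ₁ + σ₃ − (q−1)`, `C = σ₃ + σ₂ − (q−1)` and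
`D = σ₁σ₃ + q`, the quadratic relations give `ω₀ = AC`, `σ₁A = Aσ₁ = D`, `Cσ₃ = σ₂σ₃ + q` and
`Dσᵢ = (q−1)D + qA` for `i = 1, 3`. Using these and the braid relation, the bracket collapses to
`q((q−1)D + 2qA)`, and multiplying by `σ₁ − (q−1)` gives `q²(2D − (q−1)A) = q²C₁₃`.
-/

section

variable {F R : Type*} [CommRing F] [Ring R] [Algebra F R] {q : F}

lemma hecke_mul_add_sub {s : R} (hs : s * s = (q - 1) • s + q • 1) (t : R) :
    s * (s + t - (q - 1) • 1) = s * t + q • 1 := by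
  rw [mul_sub, mul_add, hs, mul_smul_comm, mul_one]
  module

lemma hecke_add_sub_mul {s : R} (hs : s * s = (q - 1) • s + q • 1) (t : R) :
    (s + t - (q - 1) • 1) * s = t * s + q • 1 := by
  rw [sub_mul, add_mul, hs, smul_mul_assoc, one_mul]
  module

lemma hecke_mul_add_smul_one_mul {s : R} (hs : s * s = (q - 1) • s + q • 1) (t : R) :
    (t * s + q • 1) * s = (q - 1) • (t * s + q • 1) + q • (t + s - (q - 1) • 1) := by
  rw [add_mul, mul_assoc, hs, smul_mul_assoc, one_mul, mul_add, mul_smul_comm,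
    mul_smul_comm, mul_one]
  module

lemma hecke_omega_eq_mul {s1 s2 s3 : R} (h3 : s3 * s3 = (q - 1) • s3 + q • 1) :
    s1 * s2 + s3 * s2 + s1 * s3 - (q - 1) • s1 - (q - 1) • s2 - (q - 1) • s3
        + (q ^ 2 - q + 1) • (1 : R) =
      (s1 + s3 - (q - 1) • 1) * (s3 + s2 - (q - 1) • 1) := by
  simp only [mul_sub, mul_add, sub_mul, add_mul, h3, smul_mul_assoc, mul_smul_comm, one_mul,
    mul_one]
  module

lemma hecke_omega_combination_eq {s1 s2 s3 ω : R} (h1 : s1 * s1 = (q - 1) • s1 + q • 1)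
    (h3 : s3 * s3 = (q - 1) • s3 + q • 1) (h23 : s2 * s3 * s2 = s3 * s2 * s3)
    (hω : ω = (s1 + s3 - (q - 1) • 1) * (s3 + s2 - (q - 1) • 1)) :
    q • (s1 * ω) + q • (ω * s3) + (q - 1) • (s1 * ω * s3) - s1 * ω * s3 * s2 =
      q • ((q - 1) • (s1 * s3 + q • 1) + (2 * q) • (s1 + s3 - (q - 1) • 1)) := by
  set A := s1 + s3 - (q - 1) • 1
  set D := s1 * s3 + q • 1
  have hs1A : s1 * A = D := hecke_mul_add_sub h1 s3
  have hDs3 : D * s3 = (q - 1) • D + q • A := hecke_mul_add_smul_one_mul h3 s1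
  have hCs3 : (s3 + s2 - (q - 1) • 1) * s3 = s2 * s3 + q • 1 := hecke_add_sub_mul h3 s2
  have hs1ω : s1 * ω = D * s3 + D * s2 - (q - 1) • D := by
    rw [hω, ← mul_assoc, hs1A, mul_sub, mul_add, mul_smul_comm, mul_one]
  have hωs3 : ω * s3 = A * (s2 * s3) + q • A := by
    rw [hω, mul_assoc, hCs3, mul_add, mul_smul_comm, mul_one]
  have hs1ωs3 : s1 * ω * s3 = D * (s2 * s3) + q • D := by
    rw [hω, ← mul_assoc, hs1A, mul_assoc, hCs3, mul_add, mul_smul_comm, mul_one]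
  have hs1ωs3s2 : s1 * ω * s3 * s2 = D * s3 * (s2 * s3) + q • (D * s2) := by
    rw [hs1ωs3, add_mul, smul_mul_assoc, mul_assoc D, h23, mul_assoc, mul_assoc]
  rw [hs1ωs3s2, hs1ωs3, hs1ω, hωs3, hDs3, add_mul ((q - 1) • D), smul_mul_assoc, smul_mul_assoc]
  module

lemma hecke_linear_mul_eq {s t : R} (hs : s * s = (q - 1) • s + q • 1) (hst : s * t = t * s) :
    ((q - 1) • (s * t + q • 1) + (2 * q) • (s + t - (q - 1) • 1)) * (s - (q - 1) • 1) =
      q • ((2 : F) • (s * t) - (q - 1) • s - (q - 1) • t + (q ^ 2 + 1) • 1) := by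
  have hDs : (s * t + q • 1) * s = (q - 1) • (s * t + q • 1) + q • (s + t - (q - 1) • 1) := by
    rw [hst, hecke_mul_add_smul_one_mul hs t]
    module
  have hAs : (s + t - (q - 1) • 1) * s = s * t + q • 1 := by
    rw [hecke_add_sub_mul hs t, hst]
  rw [add_mul, smul_mul_assoc, smul_mul_assoc, mul_sub, mul_sub, hDs, hAs, mul_smul_comm,
    mul_smul_comm, mul_one, mul_one]
  module

end

section

variable {F R : Type*} [Field F] [Ring R] [Algebra F R] {q : F}

theorem hecke_C13_eq {s1 s2 s3 ω : R} (hq : q ≠ 0) (h1 : s1 * s1 = (q - 1) • s1 + q • 1)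
    (h3 : s3 * s3 = (q - 1) • s3 + q • 1) (h13 : s1 * s3 = s3 * s1)
    (h23 : s2 * s3 * s2 = s3 * s2 * s3)
    (hω : ω = s1 * s2 + s3 * s2 + s1 * s3 - (q - 1) • s1 - (q - 1) • s2 - (q - 1) • s3
        + (q ^ 2 - q + 1) • (1 : R)) :
    (2 : F) • (s1 * s3) - (q - 1) • s1 - (q - 1) • s3 + (q ^ 2 + 1) • (1 : R) =
      (q ^ 2)⁻¹ • ((q • (s1 * ω) + q • (ω * s3) + (q - 1) • (s1 * ω * s3) - s1 * ω * s3 * s2)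
        * (s1 - (q - 1) • 1)) := by
  rw [hecke_omega_combination_eq h1 h3 h23 (hω.trans (hecke_omega_eq_mul h3)),
    smul_mul_assoc, hecke_linear_mul_eq h1 h13, smul_smul, smul_smul, mul_assoc, ← sq,
    inv_mul_cancel₀ (pow_ne_zero 2 hq), one_smul]

end

lemma ιH_mul {n : ℕ} (a b : SB n) : ιH (a * b) = ιH a * ιH b := by
  rw [ιH, map_mul (MonoidAlgebra.of K (SB n))]
  exact map_mul (RingQuot.mkAlgHom K (hrel n)) _ _

lemma σH_mul_self {n : ℕ} (i : Fin (n - 1)) :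
    σH i * σH i = (q - 1) • σH i + q • (1 : H n) := by
  have h := RingQuot.mkAlgHom_rel K (s := hrel n) ⟨i, rfl, rfl⟩
  rw [map_add, map_smul, map_smul, map_one, map_pow, sq] at h
  exact h

lemma σH_comm_of_far {n : ℕ} {i j : Fin (n - 1)} (h : far i j) :
    σH i * σH j = σH j * σH i := by
  rw [σH, σH, ← ιH_mul, ← ιH_mul]
  exact congrArg ιH ((Con.eq _).mpr (ConGen.Rel.of _ _ (SBRel.ss_comm i j h)))

lemma σH_braid_of_adj {n : ℕ} {i j : Fin (n - 1)} (h : adj i j) :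
    σH i * σH j * σH i = σH j * σH i * σH j := by
  rw [σH, σH, ← ιH_mul, ← ιH_mul, ← ιH_mul, ← ιH_mul]
  exact congrArg ιH ((Con.eq _).mpr (ConGen.Rel.of _ _ (SBRel.braid i j h)))

/-- For `n ≥ 4`, in `H(SB_n)`, with
`ω₀ = σ₁σ₂ + σ₃σ₂ + σ₁σ₃ − (q−1)σ₁ − (q−1)σ₂ − (q−1)σ₃ + (q²−q+1)` and
`C₁₃ = 2σ₁σ₃ − (q−1)σ₁ − (q−1)σ₃ + q² + 1`:
`C₁₃ = q⁻² (qσ₁ω₀ + qω₀σ₃ + (q−1)σ₁ω₀σ₃ − σ₁ω₀σ₃σ₂)(σ₁ − (q−1))`. -/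
theorem statement15 (n : ℕ) (hn : 4 ≤ n) :
    letI s1 : H n := σH ⟨0, by omega⟩
    letI s2 : H n := σH ⟨1, by omega⟩
    letI s3 : H n := σH ⟨2, by omega⟩
    letI ω₀ : H n := s1 * s2 + s3 * s2 + s1 * s3
      - cK (q - 1) * s1 - cK (q - 1) * s2 - cK (q - 1) * s3 + cK (q ^ 2 - q + 1)
    cK 2 * (s1 * s3) - cK (q - 1) * s1 - cK (q - 1) * s3 + cK (q ^ 2 + 1)
      = cK (q ^ 2)⁻¹ *
        ((cK q * (s1 * ω₀) + cK q * (ω₀ * s3) + cK (q - 1) * (s1 * ω₀ * s3)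
            - s1 * ω₀ * s3 * s2) * (s1 - cK (q - 1))) := by
  simp only [cK, Algebra.algebraMap_eq_smul_one, smul_mul_assoc, one_mul]
  exact hecke_C13_eq RatFunc.X_ne_zero (σH_mul_self _) (σH_mul_self _)
    (σH_comm_of_far (Or.inl le_rfl)) (σH_braid_of_adj (Or.inl rfl)) rfl
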